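/- Let U ⊆ ℝ² be open, φ : U → ℝ³ a smooth immersion with induced metric g, and let ĵ ∈ ℝ³ be a fixed unit vector. Then the function u = ĵ·φ : U → ℝ satisfies the Darboux equation on U: det(g⁻¹ ∇²u) = (1 − |du|²_g) K, where ∇²u is the covariant Hessian of u with respect to g, |du|²_g = Σ_{i,j} g^{ij} ∂_i u ∂_j u, and K is the Gauss curvature of g. -/

import Mathlib

noncomputable section
open Matrix Real

/-- Points of the parameter domain `U ⊆ ℝ²`. -/
abbrev Pt : Type := Fin 2 → ℝ
/-- Vectors in `ℝ³`. -/
abbrev Vec3 : Type := Fin 3 → ℝ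

/-- Partial derivative `∂ᵢ` of a scalar function on `ℝ²`. -/
def pd (i : Fin 2) (f : Pt → ℝ) : Pt → ℝ :=
  fun p => fderiv ℝ f p (Pi.single i 1)

/-- Partial derivative `∂ᵢ` of an `ℝ³`-valued function on `ℝ²`. -/
def pdV (i : Fin 2) (f : Pt → Vec3) : Pt → Vec3 :=
  fun p => fderiv ℝ f p (Pi.single i 1)

/-- The induced metric (first fundamental form) `gᵢⱼ = ∂ᵢφ ⬝ ∂ⱼφ` of a map `φ : ℝ² → ℝ³`. -/
def indMetric (φ : Pt → Vec3) : Pt → Matrix (Fin 2) (Fin 2) ℝ :=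
  fun p => Matrix.of fun i j => pdV i φ p ⬝ᵥ pdV j φ p

/-- The unit normal `n = (∂₁φ × ∂₂φ)/‖∂₁φ × ∂₂φ‖`. -/
def unitNormal (φ : Pt → Vec3) : Pt → Vec3 :=
  fun p => (Real.sqrt ((crossProduct (pdV 0 φ p) (pdV 1 φ p)) ⬝ᵥ
      (crossProduct (pdV 0 φ p) (pdV 1 φ p))))⁻¹ •
    crossProduct (pdV 0 φ p) (pdV 1 φ p)

/-- The second fundamental form `hᵢⱼ = n ⬝ ∂ᵢ∂ⱼφ`. -/
def sff (φ : Pt → Vec3) : Pt → Matrix (Fin 2) (Fin 2) ℝ :=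
  fun p => Matrix.of fun i j => unitNormal φ p ⬝ᵥ pdV i (pdV j φ) p

/-- Christoffel symbols `Γ^k_{ij}` of a metric `g`. -/
def christoffel (g : Pt → Matrix (Fin 2) (Fin 2) ℝ) (k i j : Fin 2) : Pt → ℝ :=
  fun p => (1/2) * ∑ l, (g p)⁻¹ k l *
    (pd i (fun q => g q j l) p + pd j (fun q => g q i l) p - pd l (fun q => g q i j) p)

/-- Covariant derivative `∇ᵢ h_{jk}` of a symmetric 2-tensor `h` with respect to `g`. -/
def covD (g h : Pt → Matrix (Fin 2) (Fin 2) ℝ) (i j k : Fin 2) : Pt → ℝ :=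
  fun p => pd i (fun q => h q j k) p
    - ∑ l, christoffel g l i j p * h p l k
    - ∑ l, christoffel g l i k p * h p j l

/-- Covariant Hessian `(∇²u)ᵢⱼ = ∂ᵢ∂ⱼu − Σₖ Γ^k_{ij} ∂ₖu`. -/
def hess (g : Pt → Matrix (Fin 2) (Fin 2) ℝ) (u : Pt → ℝ) (i j : Fin 2) : Pt → ℝ :=
  fun p => pd i (pd j u) p - ∑ k, christoffel g k i j p * pd k u p

/-- The curvature component `R₁₂₁₂` of a metric `g` (indices `1,2` rendered as `0,1`). -/
def R1212 (g : Pt → Matrix (Fin 2) (Fin 2) ℝ) : Pt → ℝ :=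
  fun p => ∑ m, g p 0 m *
    (pd 0 (christoffel g m 1 1) p - pd 1 (christoffel g m 1 0) p +
      ∑ l, (christoffel g m 0 l p * christoffel g l 1 1 p -
            christoffel g m 1 l p * christoffel g l 1 0 p))

/-- The Gauss curvature `K = R₁₂₁₂ / det g` of a metric `g`. -/
def gaussK (g : Pt → Matrix (Fin 2) (Fin 2) ℝ) : Pt → ℝ :=
  fun p => R1212 g p / (g p).det

/-- The squared norm `|du|²_g = Σᵢⱼ g^{ij} ∂ᵢu ∂ⱼu`. -/
def gradSq (g : Pt → Matrix (Fin 2) (Fin 2) ℝ) (u : Pt → ℝ) : Pt → ℝ :=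
  fun p => ∑ i, ∑ j, (g p)⁻¹ i j * pd i u p * pd j u p

/-- `g` is a smooth Riemannian metric on `U`: smooth entries, symmetric and
positive definite at each point of `U`. -/
def IsMetricOn (g : Pt → Matrix (Fin 2) (Fin 2) ℝ) (U : Set Pt) : Prop :=
  (∀ i j, ContDiffOn ℝ (⊤ : ℕ∞) (fun p => g p i j) U) ∧
  (∀ p ∈ U, (g p).IsSymm ∧ (g p).PosDef)

/-- `φ` is a smooth immersion on `U`. -/
def IsImmersionOn (φ : Pt → Vec3) (U : Set Pt) : Prop :=
  ContDiffOn ℝ (⊤ : ℕ∞) φ U ∧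
  ∀ p ∈ U, LinearIndependent ℝ ![pdV 0 φ p, pdV 1 φ p]

/-!
Put `N = ∂₀φ × ∂₁φ`, so that `det g = N ⬝ N`, let `n = N / |N|` and let `h` be the second
fundamental form. The Lagrange-type identity
`(v ⬝ N) (w ⬝ N) = det g (v ⬝ w) - (adj g (v ⬝ ∂φ)) ⬝ (w ⬝ ∂φ)` says that subtracting the
tangential parts leaves `v ⬝ w - (g⁻¹ (v ⬝ ∂φ)) ⬝ (w ⬝ ∂φ) = (v ⬝ n) (w ⬝ n)`.
The Christoffel symbols of the induced metric are `Γ(·, i, j) = g⁻¹ (∂ᵢ∂ⱼφ ⬝ ∂φ)`, so this identity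
gives `∇²u = (ĵ ⬝ n) h` and `1 - |du|²_g = (ĵ ⬝ n)²`. Differentiating the lowered identity
`∑ₘ gₗₘ Γᵐᵢⱼ = ∂ᵢ∂ⱼφ ⬝ ∂ₗφ` expresses `R₁₂₁₂` through the same identity and yields the Gauss equation
`R₁₂₁₂ = det h`. Hence `det (g⁻¹ ∇²u) = (ĵ ⬝ n)² det h / det g = (1 - |du|²_g) K`.
-/

open scoped ContDiff

section PartialDerivatives

variable {E F : Type*} [NormedAddCommGroup E] [NormedSpace ℝ E]
  [NormedAddCommGroup F] [NormedSpace ℝ F]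

theorem ContDiffOn.fderiv_apply_of_isOpen {U : Set E} {f : E → F} (hf : ContDiffOn ℝ ∞ f U)
    (hU : IsOpen U) (v : E) : ContDiffOn ℝ ∞ (fun q => fderiv ℝ f q v) U :=
  (hf.fderiv_of_isOpen hU le_rfl).clm_apply contDiffOn_const

theorem ContDiffOn.differentiableAt_of_isOpen {U : Set E} {p : E} {f : E → F}
    (hf : ContDiffOn ℝ ∞ f U) (hU : IsOpen U) (hp : p ∈ U) : DifferentiableAt ℝ f p :=
  (hf.contDiffAt (hU.mem_nhds hp)).differentiableAt (by simp)

theorem fderiv_fderiv_apply_comm {p : E} {f : E → F} (hf : ContDiffAt ℝ 2 f p) (v w : E) :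
    fderiv ℝ (fun q => fderiv ℝ f q v) p w = fderiv ℝ (fun q => fderiv ℝ f q w) p v := by
  have hdiff : DifferentiableAt ℝ (fderiv ℝ f) p :=
    (hf.fderiv_right (m := 1) le_rfl).differentiableAt one_ne_zero
  rw [fderiv_clm_apply hdiff (differentiableAt_const _),
    fderiv_clm_apply hdiff (differentiableAt_const _)]
  simpa using hf.isSymmSndFDerivAt (by simp) w v

theorem ContDiffOn.dotProduct {n : WithTop ℕ∞} {s : Set E} {ι : Type*} [Fintype ι]
    {f g : E → ι → ℝ} (hf : ContDiffOn ℝ n f s) (hg : ContDiffOn ℝ n g s) :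
    ContDiffOn ℝ n (fun q => f q ⬝ᵥ g q) s :=
  ContDiffOn.sum fun a _ => (contDiffOn_pi.1 hf a).mul (contDiffOn_pi.1 hg a)

variable {U : Set Pt} {p : Pt}

theorem ContDiffOn.pd {f : Pt → ℝ} (hf : ContDiffOn ℝ ∞ f U) (hU : IsOpen U) (i : Fin 2) :
    ContDiffOn ℝ ∞ (pd i f) U :=
  hf.fderiv_apply_of_isOpen hU _

theorem ContDiffOn.pdV {f : Pt → Vec3} (hf : ContDiffOn ℝ ∞ f U) (hU : IsOpen U) (i : Fin 2) :
    ContDiffOn ℝ ∞ (pdV i f) U :=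
  hf.fderiv_apply_of_isOpen hU _

theorem pdV_comm {f : Pt → Vec3} (hf : ContDiffOn ℝ ∞ f U) (hU : IsOpen U) (hp : p ∈ U)
    (i j : Fin 2) : pdV i (pdV j f) p = pdV j (pdV i f) p :=
  fderiv_fderiv_apply_comm ((hf.contDiffAt (hU.mem_nhds hp)).of_le (by norm_cast)) _ _

theorem pd_congr_of_eventuallyEq {f g : Pt → ℝ} (h : f =ᶠ[nhds p] g) (i : Fin 2) :
    pd i f p = pd i g p := by
  simp only [pd, h.fderiv_eq]

theorem pdV_congr_of_eventuallyEq {f g : Pt → Vec3} (h : f =ᶠ[nhds p] g) (i : Fin 2) :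
    pdV i f p = pdV i g p := by
  simp only [pdV, h.fderiv_eq]

theorem pd_mul {f g : Pt → ℝ} (hf : DifferentiableAt ℝ f p) (hg : DifferentiableAt ℝ g p)
    (i : Fin 2) : pd i (fun q => f q * g q) p = pd i f p * g p + f p * pd i g p := by
  simp only [pd, fderiv_fun_mul hf hg, _root_.add_apply, _root_.smul_apply, smul_eq_mul]
  ring

theorem pd_sum {ι : Type*} {s : Finset ι} {f : ι → Pt → ℝ}
    (hf : ∀ a ∈ s, DifferentiableAt ℝ (f a) p) (i : Fin 2) :
    pd i (fun q => ∑ a ∈ s, f a q) p = ∑ a ∈ s, pd i (f a) p := by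
  simp [pd, fderiv_fun_sum hf]

theorem pd_dotProduct {f g : Pt → Vec3} (hf : DifferentiableAt ℝ f p)
    (hg : DifferentiableAt ℝ g p) (i : Fin 2) :
    pd i (fun q => f q ⬝ᵥ g q) p = pdV i f p ⬝ᵥ g p + f p ⬝ᵥ pdV i g p := by
  have hcoord : ∀ {h : Pt → Vec3}, DifferentiableAt ℝ h p → ∀ a,
      DifferentiableAt ℝ (fun q => h q a) p ∧ pd i (fun q => h q a) p = pdV i h p a :=
    fun hh a => ⟨differentiableAt_pi.1 hh a, by simp [pd, pdV, fderiv_apply hh]⟩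
  simp only [dotProduct]
  rw [pd_sum fun a _ => (hcoord hf a).1.fun_mul (hcoord hg a).1, ← Finset.sum_add_distrib]
  refine Finset.sum_congr rfl fun a _ => ?_
  rw [pd_mul (hcoord hf a).1 (hcoord hg a).1, (hcoord hf a).2, (hcoord hg a).2]

theorem pd_const_dotProduct (c : Vec3) {f : Pt → Vec3} (hf : DifferentiableAt ℝ f p)
    (i : Fin 2) : pd i (fun q => c ⬝ᵥ f q) p = c ⬝ᵥ pdV i f p := by
  rw [pd_dotProduct (differentiableAt_const c) hf]
  simp [pdV]

end PartialDerivatives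

def dotGram (X : Fin 2 → Vec3) : Matrix (Fin 2) (Fin 2) ℝ :=
  Matrix.of fun i j => X i ⬝ᵥ X j

theorem det_dotGram (X : Fin 2 → Vec3) :
    (dotGram X).det = crossProduct (X 0) (X 1) ⬝ᵥ crossProduct (X 0) (X 1) := by
  rw [cross_dot_cross, det_fin_two]
  simp [dotGram, dotProduct_comm (X 1) (X 0)]

theorem det_dotGram_ne_zero {X : Fin 2 → Vec3} (hX : LinearIndependent ℝ ![X 0, X 1]) :
    (dotGram X).det ≠ 0 := by
  rw [det_dotGram, Ne, dotProduct_self_eq_zero]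
  exact crossProduct_ne_zero_iff_linearIndependent.2 hX

theorem dotProduct_cross_mul_dotProduct_cross (X : Fin 2 → Vec3) (v w : Vec3) :
    (v ⬝ᵥ crossProduct (X 0) (X 1)) * (w ⬝ᵥ crossProduct (X 0) (X 1)) =
      (dotGram X).det * (v ⬝ᵥ w) -
        ((dotGram X).adjugate *ᵥ fun i => v ⬝ᵥ X i) ⬝ᵥ fun j => w ⬝ᵥ X j := by
  simp only [adjugate_fin_two, det_fin_two, dotGram, cross_apply, dotProduct, mulVec,
    Fin.sum_univ_two, Fin.sum_univ_three, of_apply, cons_val_zero, cons_val_one, cons_val,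
    cons_val_fin_one]
  ring

theorem dotProduct_sub_inv_dotGram {X : Fin 2 → Vec3} (hX : (dotGram X).det ≠ 0) (v w : Vec3) :
    v ⬝ᵥ w - ((dotGram X)⁻¹ *ᵥ fun i => v ⬝ᵥ X i) ⬝ᵥ (fun j => w ⬝ᵥ X j) =
      (v ⬝ᵥ crossProduct (X 0) (X 1)) * (w ⬝ᵥ crossProduct (X 0) (X 1)) / (dotGram X).det := by
  rw [dotProduct_cross_mul_dotProduct_cross, inv_def, Ring.inverse_eq_inv', smul_mulVec,
    smul_dotProduct, smul_eq_mul]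
  field_simp

theorem det_inv_mul_smul {K : Type*} [Field K] (A B : Matrix (Fin 2) (Fin 2) K) (c : K) :
    (A⁻¹ * (c • B)).det = c ^ 2 * (B.det / A.det) := by
  rw [det_mul, det_nonsing_inv, Ring.inverse_eq_inv', det_smul, Fintype.card_fin]
  ring

theorem differentiableAt_inv_apply {p : Pt} {M : Pt → Matrix (Fin 2) (Fin 2) ℝ}
    (hM : ∀ i j, DifferentiableAt ℝ (fun q => M q i j) p) (hdet : (M p).det ≠ 0) (i j : Fin 2) :
    DifferentiableAt ℝ (fun q => (M q)⁻¹ i j) p := by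
  have hdet' : DifferentiableAt ℝ (fun q => ((M q).det)⁻¹) p := by
    simp only [det_fin_two]
    rw [det_fin_two] at hdet
    exact (((hM 0 0).mul (hM 1 1)).sub ((hM 0 1).mul (hM 1 0))).inv hdet
  simp only [inv_def, Ring.inverse_eq_inv', adjugate_fin_two, Matrix.smul_apply, smul_eq_mul]
  fin_cases i <;> fin_cases j
  · exact hdet'.mul (hM 1 1)
  · exact hdet'.mul (hM 0 1).neg
  · exact hdet'.mul (hM 1 0).neg
  · exact hdet'.mul (hM 0 0)

theorem differentiableAt_christoffel {U : Set Pt} {p : Pt} {g : Pt → Matrix (Fin 2) (Fin 2) ℝ}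
    (hg : ∀ i j, ContDiffOn ℝ ∞ (fun q => g q i j) U) (hU : IsOpen U) (hp : p ∈ U)
    (hdet : (g p).det ≠ 0) (k i j : Fin 2) : DifferentiableAt ℝ (christoffel g k i j) p := by
  have hpd : ∀ l a b, DifferentiableAt ℝ (pd l fun q => g q a b) p := fun l a b =>
    ((hg a b).pd hU l).differentiableAt_of_isOpen hU hp
  have hinv := differentiableAt_inv_apply
    (fun a b => (hg a b).differentiableAt_of_isOpen hU hp) hdet
  exact (differentiableAt_const _).mul <| DifferentiableAt.fun_sum fun l _ =>
    (hinv k l).mul (((hpd i j l).add (hpd j i l)).sub (hpd l i j))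

section Immersion

variable {U : Set Pt} {φ : Pt → Vec3} {p : Pt}

theorem contDiffOn_indMetric (hφ : ContDiffOn ℝ ∞ φ U) (hU : IsOpen U) (i j : Fin 2) :
    ContDiffOn ℝ ∞ (fun q => indMetric φ q i j) U :=
  (hφ.pdV hU i).dotProduct (hφ.pdV hU j)

theorem pd_indMetric (hφ : ContDiffOn ℝ ∞ φ U) (hU : IsOpen U) (hp : p ∈ U) (k i j : Fin 2) :
    pd k (fun q => indMetric φ q i j) p =
      pdV k (pdV i φ) p ⬝ᵥ pdV j φ p + pdV i φ p ⬝ᵥ pdV k (pdV j φ) p :=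
  pd_dotProduct ((hφ.pdV hU i).differentiableAt_of_isOpen hU hp)
    ((hφ.pdV hU j).differentiableAt_of_isOpen hU hp) k

theorem det_indMetric_ne_zero (hφ : IsImmersionOn φ U) (hp : p ∈ U) :
    (indMetric φ p).det ≠ 0 :=
  det_dotGram_ne_zero (hφ.2 p hp)

theorem dotProduct_sub_inv_indMetric_eq_unitNormal (hφ : IsImmersionOn φ U) (hp : p ∈ U)
    (v w : Vec3) :
    v ⬝ᵥ w - ((indMetric φ p)⁻¹ *ᵥ fun i => v ⬝ᵥ pdV i φ p) ⬝ᵥ (fun j => w ⬝ᵥ pdV j φ p) =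
      (v ⬝ᵥ unitNormal φ p) * (w ⬝ᵥ unitNormal φ p) := by
  have hdet := det_indMetric_ne_zero hφ hp
  rw [indMetric, ← dotGram] at hdet ⊢
  rw [dotProduct_sub_inv_dotGram hdet, det_dotGram]
  have hnonneg : 0 ≤ crossProduct (pdV 0 φ p) (pdV 1 φ p) ⬝ᵥ crossProduct (pdV 0 φ p) (pdV 1 φ p) :=
    Finset.sum_nonneg fun a _ => mul_self_nonneg _
  simp only [unitNormal, dotProduct_smul, smul_eq_mul]
  field_simp
  rw [Real.sq_sqrt hnonneg]

theorem christoffel_indMetric (hφ : ContDiffOn ℝ ∞ φ U) (hU : IsOpen U) (hp : p ∈ U)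
    (k i j : Fin 2) :
    christoffel (indMetric φ) k i j p =
      ((indMetric φ p)⁻¹ *ᵥ fun l => pdV i (pdV j φ) p ⬝ᵥ pdV l φ p) k := by
  have hfirst : ∀ l, pd i (fun q => indMetric φ q j l) p + pd j (fun q => indMetric φ q i l) p
      - pd l (fun q => indMetric φ q i j) p = 2 * (pdV i (pdV j φ) p ⬝ᵥ pdV l φ p) := by
    intro l
    rw [pd_indMetric hφ hU hp, pd_indMetric hφ hU hp, pd_indMetric hφ hU hp,
      pdV_comm hφ hU hp j i, pdV_comm hφ hU hp l i, pdV_comm hφ hU hp l j,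
      dotProduct_comm (pdV j φ p)]
    ring
  simp only [christoffel, hfirst]
  rw [mulVec, dotProduct, Finset.mul_sum]
  exact Finset.sum_congr rfl fun l _ => by ring

theorem sum_christoffel_indMetric_mul (hφ : ContDiffOn ℝ ∞ φ U) (hU : IsOpen U) (hp : p ∈ U)
    (i j : Fin 2) (c : Fin 2 → ℝ) :
    ∑ k, christoffel (indMetric φ) k i j p * c k =
      ((indMetric φ p)⁻¹ *ᵥ fun l => pdV i (pdV j φ) p ⬝ᵥ pdV l φ p) ⬝ᵥ c := by
  simp only [christoffel_indMetric hφ hU hp]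
  rfl

theorem sum_indMetric_mul_christoffel (hφ : IsImmersionOn φ U) (hU : IsOpen U) (hp : p ∈ U)
    (l i j : Fin 2) :
    ∑ m, indMetric φ p l m * christoffel (indMetric φ) m i j p =
      pdV i (pdV j φ) p ⬝ᵥ pdV l φ p := by
  simp only [christoffel_indMetric hφ.1 hU hp]
  change (indMetric φ p *ᵥ ((indMetric φ p)⁻¹ *ᵥ _)) l = _
  rw [mulVec_mulVec, mul_nonsing_inv _ (det_indMetric_ne_zero hφ hp).isUnit, one_mulVec]

theorem sum_indMetric_mul_pd_christoffel_add (hφ : IsImmersionOn φ U) (hU : IsOpen U)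
    (hp : p ∈ U) (l k i j : Fin 2) :
    ∑ m, indMetric φ p l m * (pd k (christoffel (indMetric φ) m i j) p +
        ∑ n, christoffel (indMetric φ) m k n p * christoffel (indMetric φ) n i j p) =
      pdV k (pdV i (pdV j φ)) p ⬝ᵥ pdV l φ p + pdV i (pdV j φ) p ⬝ᵥ pdV k (pdV l φ) p -
        ∑ m, christoffel (indMetric φ) m i j p * (pdV k (pdV l φ) p ⬝ᵥ pdV m φ p) := by
  set Γ := christoffel (indMetric φ)
  have hΓ : ∀ m, DifferentiableAt ℝ (Γ m i j) p := fun m =>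
    differentiableAt_christoffel (contDiffOn_indMetric hφ.1 hU) hU hp
      (det_indMetric_ne_zero hφ hp) m i j
  have hg : ∀ m, DifferentiableAt ℝ (fun q => indMetric φ q l m) p := fun m =>
    (contDiffOn_indMetric hφ.1 hU l m).differentiableAt_of_isOpen hU hp
  have hlower : (fun q => ∑ m, indMetric φ q l m * Γ m i j q) =ᶠ[nhds p]
      fun q => pdV i (pdV j φ) q ⬝ᵥ pdV l φ q :=
    Filter.eventuallyEq_of_mem (hU.mem_nhds hp) fun q hq =>
      sum_indMetric_mul_christoffel hφ hU hq l i j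
  have hderiv : ∑ m, (pd k (fun q => indMetric φ q l m) p * Γ m i j p +
      indMetric φ p l m * pd k (Γ m i j) p) =
      pdV k (pdV i (pdV j φ)) p ⬝ᵥ pdV l φ p + pdV i (pdV j φ) p ⬝ᵥ pdV k (pdV l φ) p := by
    rw [← pd_dotProduct (((hφ.1.pdV hU j).pdV hU i).differentiableAt_of_isOpen hU hp)
      ((hφ.1.pdV hU l).differentiableAt_of_isOpen hU hp), ← pd_congr_of_eventuallyEq hlower,
      pd_sum fun m _ => (hg m).fun_mul (hΓ m)]
    exact Finset.sum_congr rfl fun m _ => (pd_mul (hg m) (hΓ m) k).symm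
  have hquad : ∑ m, indMetric φ p l m * ∑ n, Γ m k n p * Γ n i j p =
      ∑ n, Γ n i j p * (pdV k (pdV n φ) p ⬝ᵥ pdV l φ p) := by
    have hlow := fun n => sum_indMetric_mul_christoffel hφ hU hp l k n
    simp only [Fin.sum_univ_two] at hlow ⊢
    rw [← hlow 0, ← hlow 1]
    ring
  simp only [pd_indMetric hφ.1 hU hp, dotProduct_comm (pdV l φ p), mul_comm _ (Γ _ i j p),
    mul_add, Finset.sum_add_distrib] at hderiv
  simp only [mul_add, Finset.sum_add_distrib, hquad]
  linarith

theorem R1212_indMetric_eq_det_sff (hφ : IsImmersionOn φ U) (hU : IsOpen U) (hp : p ∈ U) :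
    R1212 (indMetric φ) p = (sff φ p).det := by
  have hsplit : R1212 (indMetric φ) p =
      ∑ m, indMetric φ p 0 m * (pd 0 (christoffel (indMetric φ) m 1 1) p +
        ∑ n, christoffel (indMetric φ) m 0 n p * christoffel (indMetric φ) n 1 1 p) -
      ∑ m, indMetric φ p 0 m * (pd 1 (christoffel (indMetric φ) m 1 0) p +
        ∑ n, christoffel (indMetric φ) m 1 n p * christoffel (indMetric φ) n 1 0 p) := by
    simp only [R1212, Fin.sum_univ_two]
    ring
  have hswap : pdV 1 (pdV 0 φ) =ᶠ[nhds p] pdV 0 (pdV 1 φ) :=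
    Filter.eventuallyEq_of_mem (hU.mem_nhds hp) fun q hq => pdV_comm hφ.1 hU hq 1 0
  have hthird : pdV 1 (pdV 1 (pdV 0 φ)) p = pdV 0 (pdV 1 (pdV 1 φ)) p := by
    rw [pdV_congr_of_eventuallyEq hswap, pdV_comm (hφ.1.pdV hU 1) hU hp]
  have h1100 := dotProduct_sub_inv_indMetric_eq_unitNormal hφ hp
    (pdV 1 (pdV 1 φ) p) (pdV 0 (pdV 0 φ) p)
  have h1010 := dotProduct_sub_inv_indMetric_eq_unitNormal hφ hp
    (pdV 1 (pdV 0 φ) p) (pdV 1 (pdV 0 φ) p)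
  rw [hsplit, sum_indMetric_mul_pd_christoffel_add hφ hU hp,
    sum_indMetric_mul_pd_christoffel_add hφ hU hp, hthird, det_fin_two]
  simp only [sum_christoffel_indMetric_mul hφ.1 hU hp, sff, of_apply,
    dotProduct_comm (unitNormal φ p), pdV_comm hφ.1 hU hp 0 1]
  linear_combination h1100 - h1010

theorem pd_const_dotProduct_of_mem (hφ : ContDiffOn ℝ ∞ φ U) (hU : IsOpen U) (hp : p ∈ U)
    (c : Vec3) (k : Fin 2) : pd k (fun q => c ⬝ᵥ φ q) p = c ⬝ᵥ pdV k φ p :=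
  pd_const_dotProduct c (hφ.differentiableAt_of_isOpen hU hp) k

theorem hess_indMetric_const_dotProduct (hφ : IsImmersionOn φ U) (hU : IsOpen U) (hp : p ∈ U)
    (c : Vec3) (i j : Fin 2) :
    hess (indMetric φ) (fun q => c ⬝ᵥ φ q) i j p = (c ⬝ᵥ unitNormal φ p) * sff φ p i j := by
  have hdu : pd j (fun q => c ⬝ᵥ φ q) =ᶠ[nhds p] fun q => c ⬝ᵥ pdV j φ q :=
    Filter.eventuallyEq_of_mem (hU.mem_nhds hp) fun q hq =>
      pd_const_dotProduct_of_mem hφ.1 hU hq c j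
  rw [hess, pd_congr_of_eventuallyEq hdu, pd_const_dotProduct_of_mem (hφ.1.pdV hU j) hU hp]
  simp only [pd_const_dotProduct_of_mem hφ.1 hU hp, sum_christoffel_indMetric_mul hφ.1 hU hp]
  rw [dotProduct_comm c, dotProduct_sub_inv_indMetric_eq_unitNormal hφ hp, sff, of_apply,
    dotProduct_comm (unitNormal φ p)]
  ring

theorem one_sub_gradSq_indMetric_const_dotProduct (hφ : IsImmersionOn φ U) (hU : IsOpen U)
    (hp : p ∈ U) {c : Vec3} (hc : c ⬝ᵥ c = 1) :
    1 - gradSq (indMetric φ) (fun q => c ⬝ᵥ φ q) p = (c ⬝ᵥ unitNormal φ p) ^ 2 := by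
  rw [← hc, sq, ← dotProduct_sub_inv_indMetric_eq_unitNormal hφ hp]
  congr 1
  simp only [gradSq, pd_const_dotProduct_of_mem hφ.1 hU hp]
  simp only [mulVec, dotProduct, Fin.sum_univ_two]
  ring

end Immersion

/-- **The Darboux equation.** For a smooth immersion `φ : U → ℝ³` with induced metric `g`
and a fixed unit vector `ĵ`, the height function `u = ĵ·φ` satisfies
`det(g⁻¹ ∇²u) = (1 − |du|²_g) K`, where `K` is the Gauss curvature of `g`. -/
theorem height_function_satisfies_darboux
    (U : Set Pt) (hU : IsOpen U)
    (φ : Pt → Vec3) (hφ : IsImmersionOn φ U)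
    (jhat : Vec3) (hjhat : jhat ⬝ᵥ jhat = 1) :
    ∀ p ∈ U,
      ((indMetric φ p)⁻¹ *
          Matrix.of (fun i j => hess (indMetric φ) (fun q => jhat ⬝ᵥ φ q) i j p)).det =
        (1 - gradSq (indMetric φ) (fun q => jhat ⬝ᵥ φ q) p) * gaussK (indMetric φ) p := by
  intro p hp
  have hhess : Matrix.of (fun i j => hess (indMetric φ) (fun q => jhat ⬝ᵥ φ q) i j p) =
      (jhat ⬝ᵥ unitNormal φ p) • sff φ p := by
    ext i j
    exact hess_indMetric_const_dotProduct hφ hU hp jhat i j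
  rw [hhess, det_inv_mul_smul, one_sub_gradSq_indMetric_const_dotProduct hφ hU hp hjhat, gaussK,
    R1212_indMetric_eq_det_sff hφ hU hp]
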